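/- The discrete Laplacian noise adding mechanism A(x) = x + θ, where θ has the discretized Laplace PMF with scale λ, is ε-differentially private with ε = (m + Δ)/λ, for adjacency parameter m. -/

import Mathlib

/-- Discretized Laplacian PMF on the lattice `Δℤ` (index `k : ℤ` stands for the point `k·Δ`),
with location `μ·Δ` and scale `λ`. -/
noncomputable def lapPMF (Δ lam : ℝ) (μ : ℤ) (k : ℤ) : ℝ :=
  if μ ≤ k then ((1 - Real.exp (-Δ / lam)) / 2) * Real.exp ((Δ * μ - Δ * k) / lam)
  else ((Real.exp (Δ / lam) - 1) / 2) * Real.exp ((Δ * k - Δ * μ) / lam)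

/-!
Write the PMF as `c · exp (φ k / λ)` with `φ k = Δ · (𝟙[k < μ] − |k − μ|)`. Between two points `n`, `n'`
the exponent `φ` grows by at most `Δ · |n − n'| + Δ`, the extra `Δ` coming from the jump of the indicator
at `μ`; hence the PMF at `n` is at most `exp ((m + Δ) / λ)` times the PMF at `n'` whenever the points
are at distance at most `m`. Summing this pointwise bound over `O` gives the claim. The sums converge since
`φ k ≤ Δ − Δ · |k − μ|` dominates the PMF by a two-sided geometric series.
-/

open Real

noncomputable def lapExponent (Δ : ℝ) (μ k : ℤ) : ℝ :=
  Δ * ((if k < μ then 1 else 0) - |(k : ℝ) - μ|)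

section Laplace

variable {Δ lam : ℝ}

lemma lapPMF_eq_mul_exp (μ k : ℤ) :
    lapPMF Δ lam μ k = (1 - exp (-Δ / lam)) / 2 * exp (lapExponent Δ μ k / lam) := by
  unfold lapPMF lapExponent
  split_ifs with hle hlt hlt
  · omega
  · rw [abs_of_nonneg (by exact_mod_cast sub_nonneg.2 hle)]
    ring_nf
  · rw [abs_of_neg (by exact_mod_cast sub_neg.2 hlt), neg_div, exp_neg,
      show Δ * (1 - -(k - μ : ℝ)) / lam = Δ / lam + (Δ * k - Δ * μ) / lam by ring, exp_add]
    field_simp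
  · omega

lemma lapExponent_le_add (hΔ : 0 ≤ Δ) (μ n n' : ℤ) :
    lapExponent Δ μ n ≤ Δ * |(n : ℝ) - n'| + Δ + lapExponent Δ μ n' := by
  have hind : (if n < μ then (1 : ℝ) else 0) ≤ 1 + if n' < μ then 1 else 0 := by
    split_ifs <;> norm_num
  have hdist : |(n' : ℝ) - μ| ≤ |(n : ℝ) - n'| + |(n : ℝ) - μ| := by
    rw [abs_sub_comm (n : ℝ) n']
    exact abs_sub_le _ _ _
  unfold lapExponent
  nlinarith

lemma lapExponent_le (hΔ : 0 ≤ Δ) (μ k : ℤ) : lapExponent Δ μ k ≤ Δ - Δ * |(k : ℝ) - μ| := by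
  have hind : (if k < μ then (1 : ℝ) else 0) ≤ 1 := by split_ifs <;> norm_num
  unfold lapExponent
  nlinarith

lemma one_sub_exp_neg_div_nonneg (hΔ : 0 ≤ Δ) (hlam : 0 ≤ lam) : 0 ≤ 1 - exp (-Δ / lam) :=
  sub_nonneg.2 <| exp_le_one_iff.2 <| div_nonpos_of_nonpos_of_nonneg (neg_nonpos.2 hΔ) hlam

lemma lapPMF_nonneg (hΔ : 0 ≤ Δ) (hlam : 0 ≤ lam) (μ k : ℤ) : 0 ≤ lapPMF Δ lam μ k := by
  rw [lapPMF_eq_mul_exp]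
  have := one_sub_exp_neg_div_nonneg hΔ hlam
  positivity

lemma lapPMF_le_exp_mul (hΔ : 0 ≤ Δ) (hlam : 0 ≤ lam) (μ : ℤ) {M n n' : ℤ}
    (h : |n - n'| ≤ M) :
    lapPMF Δ lam μ n ≤ exp ((M * Δ + Δ) / lam) * lapPMF Δ lam μ n' := by
  have hdist : |(n : ℝ) - n'| ≤ M := by exact_mod_cast h
  have hexp : lapExponent Δ μ n ≤ M * Δ + Δ + lapExponent Δ μ n' := by
    nlinarith [lapExponent_le_add hΔ μ n n']
  rw [lapPMF_eq_mul_exp, lapPMF_eq_mul_exp, mul_left_comm, ← exp_add, ← add_div]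
  gcongr
  exact div_nonneg (one_sub_exp_neg_div_nonneg hΔ hlam) zero_le_two

lemma summable_pow_natAbs {r : ℝ} (h0 : 0 ≤ r) (h1 : r < 1) :
    Summable fun n : ℤ => r ^ n.natAbs :=
  Summable.of_nat_of_neg (by simpa using summable_geometric_of_lt_one h0 h1)
    (by simpa using summable_geometric_of_lt_one h0 h1)

lemma summable_lapPMF (hΔ : 0 < Δ) (hlam : 0 < lam) (μ : ℤ) : Summable (lapPMF Δ lam μ) := by
  set r := exp (-Δ / lam)
  have hr : r < 1 := exp_lt_one_iff.2 (div_neg_of_neg_of_pos (neg_neg_of_pos hΔ) hlam)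
  have hgeom : Summable fun k : ℤ => (1 - r) / 2 * exp (Δ / lam) * r ^ (k - μ).natAbs :=
    ((summable_pow_natAbs (exp_pos _).le hr).comp_injective sub_left_injective).mul_left _
  refine hgeom.of_nonneg_of_le (lapPMF_nonneg hΔ.le hlam.le μ) fun k => ?_
  have hpow : exp (Δ / lam) * r ^ (k - μ).natAbs = exp ((Δ - Δ * |(k : ℝ) - μ|) / lam) := by
    rw [← exp_nat_mul, ← exp_add, Nat.cast_natAbs, Int.cast_abs, Int.cast_sub]
    ring_nf
  rw [lapPMF_eq_mul_exp, mul_assoc, hpow]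
  gcongr
  exact lapExponent_le hΔ.le μ k

end Laplace

lemma tsum_subtype_comp_sub_le_mul {G : Type*} [AddGroup G] {f : G → ℝ} (hf : Summable f)
    {c : ℝ} {x y : G} (h : ∀ k, f (k - x) ≤ c * f (k - y)) (O : Set G) :
    ∑' k : O, f (k - x) ≤ c * ∑' k : O, f (k - y) := by
  rw [← tsum_mul_left]
  exact (hf.comp_injective sub_left_injective).subtype O |>.tsum_le_tsum (fun k => h k)
    ((hf.comp_injective sub_left_injective).subtype O |>.mul_left c)

theorem laplace_mechanism_eps_dp_general
    (Δ lam : ℝ) (hΔ : 0 < Δ) (hlam : 0 < lam)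
    (μ : ℤ) (M : ℤ) :
    ∀ x y : ℤ, |x - y| ≤ M → ∀ O : Set ℤ,
      (∑' k : O, lapPMF Δ lam μ ((k : ℤ) - x))
        ≤ Real.exp (((M : ℝ) * Δ + Δ) / lam) * ∑' k : O, lapPMF Δ lam μ ((k : ℤ) - y) := by
  intro x y hxy O
  refine tsum_subtype_comp_sub_le_mul (summable_lapPMF hΔ hlam μ) (fun k => ?_) O
  refine lapPMF_le_exp_mul hΔ.le hlam.le μ ?_
  rwa [sub_sub_sub_cancel_left, abs_sub_comm]

/-- The discrete Laplacian noise adding mechanism `A(x) = x + θ` is `ε`-differentially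
private with `ε = (m + Δ)/λ`, for adjacency parameter `m = M·Δ`. -/
theorem laplace_mechanism_eps_dp
    (Δ lam : ℝ) (hΔ : 0 < Δ) (hlam : 0 < lam)
    (μ : ℤ) (M : ℤ) (hM : 0 < M) :
    ∀ x y : ℤ, |x - y| ≤ M → ∀ O : Set ℤ,
      (∑' k : O, lapPMF Δ lam μ ((k : ℤ) - x))
        ≤ Real.exp (((M : ℝ) * Δ + Δ) / lam) * ∑' k : O, lapPMF Δ lam μ ((k : ℤ) - y) :=
  laplace_mechanism_eps_dp_general Δ lam hΔ hlam μ M
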